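/- arXiv:2604.17239 — 6 statements merged into one kernel-verified Lean document; each statement's English description precedes it below -/
import Mathlib

section
/- Let n ≥ 1 and let W_1, …, W_n be nonnegative, identically distributed real-valued random variables on a common probability space satisfying ∑_{i=1}^n W_i = n almost surely. Then for every real x > 0 one has 1 ≤ E[max_{1≤i≤n} W_i] ≤ x + (n/x) · sup_{t ≥ x} t² P(W_1 ≥ t). Equivalently, the quantity a_n := n^{-1/2} E[max_{1≤i≤n} W_i] satisfies n^{-1/2} ≤ a_n ≤ x/√n + (√n/x) · sup_{t ≥ x} t² P(W_1 ≥ t). -/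
open MeasureTheory ProbabilityTheory ENNReal Filter

/-!
Since the weights average to `1`, their maximum `M` is at least `1`. For the upper bound write
`E[M] = ∫₀^∞ P(M ≥ t) dt`, bound the integrand by `1` on `(0, x]`, and on `(x, ∞)` use the union
bound `P(M ≥ t) ≤ n P(W_i ≥ t) ≤ n S / t²` with `S = sup_{t ≥ x} t² P(W_i ≥ t)`; finally
`∫_x^∞ t⁻² dt = 1 / x`.
-/

lemma one_le_ciSup_of_sum_eq_card {ι : Type*} [Fintype ι] [Nonempty ι] {a : ι → ℝ}
    (h : ∑ j, a j = Fintype.card ι) : 1 ≤ ⨆ j, a j := by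
  have hbdd : BddAbove (Set.range a) := (Set.finite_range a).bddAbove
  have hcard : (0 : ℝ) < Fintype.card ι := by exact_mod_cast Fintype.card_pos
  have : (Fintype.card ι : ℝ) * 1 ≤ Fintype.card ι * ⨆ j, a j := by
    calc (Fintype.card ι : ℝ) * 1 = ∑ j, a j := by rw [h, mul_one]
      _ ≤ Fintype.card ι • ⨆ j, a j :=
        Finset.sum_le_card_nsmul _ _ _ fun j _ => le_ciSup hbdd j
      _ = Fintype.card ι * ⨆ j, a j := nsmul_eq_mul _ _
  exact le_of_mul_le_mul_left this hcard

lemma measure_le_ciSup_le_card_mul {Ω ι : Type*} [MeasurableSpace Ω] {μ : Measure Ω}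
    [Fintype ι] {W : ι → Ω → ℝ} {i : ι}
    (hident : ∀ j, IdentDistrib (W j) (W i) μ μ) (t : ℝ) :
    μ {ω | t ≤ ⨆ j, W j ω} ≤ Fintype.card ι * μ {ω | t ≤ W i ω} := by
  have : Nonempty ι := ⟨i⟩
  have hsub : {ω | t ≤ ⨆ j, W j ω} ⊆ ⋃ j, {ω | t ≤ W j ω} := by
    intro ω hω
    obtain ⟨j, hj⟩ := exists_eq_ciSup_of_finite (f := fun j => W j ω)
    exact Set.mem_iUnion.mpr ⟨j, by simpa [hj] using hω⟩
  have hsame : ∀ j, μ {ω | t ≤ W j ω} = μ {ω | t ≤ W i ω} := fun j =>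
    (hident j).measure_mem_eq (s := Set.Ici t) measurableSet_Ici
  calc μ {ω | t ≤ ⨆ j, W j ω} ≤ μ (⋃ j, {ω | t ≤ W j ω}) := measure_mono hsub
    _ ≤ ∑ j, μ {ω | t ≤ W j ω} := measure_iUnion_fintype_le μ _
    _ = Fintype.card ι * μ {ω | t ≤ W i ω} := by simp [hsame]

lemma lintegral_Ioi_inv_sq {x : ℝ} (hx : 0 < x) :
    ∫⁻ t in Set.Ioi x, (ENNReal.ofReal (t ^ 2))⁻¹ = (ENNReal.ofReal x)⁻¹ := by
  have hrpow : ∀ t ∈ Set.Ioi x, (ENNReal.ofReal (t ^ 2))⁻¹ = ENNReal.ofReal (t ^ (-2 : ℝ)) := by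
    intro t ht
    have ht0 : 0 < t := hx.trans ht
    rw [← ENNReal.ofReal_inv_of_pos (by positivity), Real.rpow_neg ht0.le]
    norm_cast
  have hnonneg : 0 ≤ᵐ[volume.restrict (Set.Ioi x)] fun t : ℝ => t ^ (-2 : ℝ) :=
    (ae_restrict_iff' measurableSet_Ioi).mpr
      (ae_of_all _ fun t ht => Real.rpow_nonneg (hx.trans ht).le _)
  rw [setLIntegral_congr_fun measurableSet_Ioi hrpow, ← ofReal_integral_eq_lintegral_ofReal
    (integrableOn_Ioi_rpow_of_lt (by norm_num) hx) hnonneg,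
    integral_Ioi_rpow_of_lt (by norm_num) hx, ← ENNReal.ofReal_inv_of_pos hx]
  norm_num [Real.rpow_neg_one]

lemma lintegral_ofReal_le_of_sq_mul_tail_le {Ω : Type*} [MeasurableSpace Ω] {μ : Measure Ω}
    [IsZeroOrProbabilityMeasure μ] {f : Ω → ℝ} (hf : AEMeasurable f μ) (hf0 : 0 ≤ᵐ[μ] f)
    {x : ℝ} (hx : 0 < x) {C : ℝ≥0∞}
    (hC : ∀ t, x < t → ENNReal.ofReal (t ^ 2) * μ {ω | t ≤ f ω} ≤ C) :
    ∫⁻ ω, ENNReal.ofReal (f ω) ∂μ ≤ ENNReal.ofReal x + C / ENNReal.ofReal x := by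
  have hnear : ∫⁻ t in Set.Ioc 0 x, μ {ω | t ≤ f ω} ≤ ENNReal.ofReal x :=
    calc ∫⁻ t in Set.Ioc 0 x, μ {ω | t ≤ f ω} ≤ ∫⁻ _ in Set.Ioc 0 x, 1 :=
          lintegral_mono fun _ => prob_le_one
      _ = ENNReal.ofReal x := by simp [Real.volume_Ioc]
  have htail : ∀ t ∈ Set.Ioi x, μ {ω | t ≤ f ω} ≤ C * (ENNReal.ofReal (t ^ 2))⁻¹ := by
    intro t ht
    rw [← div_eq_mul_inv, ENNReal.le_div_iff_mul_le
      (Or.inl (by simpa using (hx.trans ht).ne')) (Or.inl ENNReal.ofReal_ne_top), mul_comm]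
    exact hC t ht
  have hfar : ∫⁻ t in Set.Ioi x, μ {ω | t ≤ f ω} ≤ C / ENNReal.ofReal x :=
    calc ∫⁻ t in Set.Ioi x, μ {ω | t ≤ f ω}
        ≤ ∫⁻ t in Set.Ioi x, C * (ENNReal.ofReal (t ^ 2))⁻¹ :=
          setLIntegral_mono' measurableSet_Ioi htail
      _ = C / ENNReal.ofReal x := by
          rw [lintegral_const_mul _ (by fun_prop), lintegral_Ioi_inv_sq hx, div_eq_mul_inv]
  calc ∫⁻ ω, ENNReal.ofReal (f ω) ∂μ = ∫⁻ t in Set.Ioi 0, μ {ω | t ≤ f ω} :=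
        lintegral_eq_lintegral_meas_le μ hf0 hf
    _ = (∫⁻ t in Set.Ioc 0 x, μ {ω | t ≤ f ω}) + ∫⁻ t in Set.Ioi x, μ {ω | t ≤ f ω} := by
        rw [← lintegral_union measurableSet_Ioi (Set.Ioc_disjoint_Ioi le_rfl),
          Set.Ioc_union_Ioi_eq_Ioi hx.le]
    _ ≤ ENNReal.ofReal x + C / ENNReal.ofReal x := add_le_add hnear hfar

theorem stmt_0_general {Ω : Type*} [MeasurableSpace Ω] (μ : Measure Ω) [IsProbabilityMeasure μ]
    (n : ℕ) (W : Fin n → Ω → ℝ)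
    (hident : ∀ i j, IdentDistrib (W i) (W j) μ μ)
    (hsum : ∀ᵐ ω ∂μ, ∑ i, W i ω = n)
    (x : ℝ) (hx : 0 < x) (i : Fin n) :
    1 ≤ ∫⁻ ω, ENNReal.ofReal (⨆ j, W j ω) ∂μ ∧
      ∫⁻ ω, ENNReal.ofReal (⨆ j, W j ω) ∂μ ≤
        ENNReal.ofReal x + ((n : ℝ≥0∞) / ENNReal.ofReal x) *
          ⨆ t ∈ Set.Ici x, ENNReal.ofReal (t ^ 2) * μ {ω | t ≤ W i ω} := by
  have : Nonempty (Fin n) := ⟨i⟩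
  have hone : ∀ᵐ ω ∂μ, 1 ≤ ⨆ j, W j ω := hsum.mono fun ω hω =>
    one_le_ciSup_of_sum_eq_card (by simpa using hω)
  refine ⟨?_, ?_⟩
  · calc (1 : ℝ≥0∞) = ∫⁻ _, 1 ∂μ := by simp
      _ ≤ ∫⁻ ω, ENNReal.ofReal (⨆ j, W j ω) ∂μ :=
          lintegral_mono_ae (hone.mono fun ω hω => ENNReal.one_le_ofReal.mpr hω)
  · set S := ⨆ t ∈ Set.Ici x, ENNReal.ofReal (t ^ 2) * μ {ω | t ≤ W i ω}
    have htail : ∀ t, x < t → ENNReal.ofReal (t ^ 2) * μ {ω | t ≤ ⨆ j, W j ω} ≤ n * S := by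
      intro t ht
      calc ENNReal.ofReal (t ^ 2) * μ {ω | t ≤ ⨆ j, W j ω}
          ≤ ENNReal.ofReal (t ^ 2) * (n * μ {ω | t ≤ W i ω}) := by
            gcongr
            simpa using measure_le_ciSup_le_card_mul (fun j => hident j i) t
        _ = n * (ENNReal.ofReal (t ^ 2) * μ {ω | t ≤ W i ω}) := by ring
        _ ≤ n * S := by
            gcongr
            exact le_biSup (fun t => ENNReal.ofReal (t ^ 2) * μ {ω | t ≤ W i ω}) ht.le
    calc ∫⁻ ω, ENNReal.ofReal (⨆ j, W j ω) ∂μ ≤ ENNReal.ofReal x + n * S / ENNReal.ofReal x :=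
          lintegral_ofReal_le_of_sq_mul_tail_le
            (AEMeasurable.iSup fun j => (hident j i).aemeasurable_fst)
            (hone.mono fun ω hω => zero_le_one.trans hω) hx htail
      _ = ENNReal.ofReal x + (n / ENNReal.ofReal x) * S := by rw [ENNReal.mul_div_right_comm]

/-- For nonnegative, identically distributed bootstrap weights
`W_1, …, W_n` summing to `n` almost surely, and any `x > 0`,
`1 ≤ E[max_i W_i] ≤ x + (n/x) · sup_{t ≥ x} t² P(W_1 ≥ t)`. -/
theorem stmt_0 {Ω : Type*} [MeasurableSpace Ω] (μ : Measure Ω) [IsProbabilityMeasure μ]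
    (n : ℕ) (hn : 1 ≤ n) (W : Fin n → Ω → ℝ)
    (hmeas : ∀ i, Measurable (W i))
    (hnonneg : ∀ i ω, 0 ≤ W i ω)
    (hident : ∀ i j, IdentDistrib (W i) (W j) μ μ)
    (hsum : ∀ᵐ ω ∂μ, ∑ i, W i ω = n)
    (x : ℝ) (hx : 0 < x) (i : Fin n) :
    1 ≤ ∫⁻ ω, ENNReal.ofReal (⨆ j, W j ω) ∂μ ∧
      ∫⁻ ω, ENNReal.ofReal (⨆ j, W j ω) ∂μ ≤
        ENNReal.ofReal x + ((n : ℝ≥0∞) / ENNReal.ofReal x) *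
          ⨆ t ∈ Set.Ici x, ENNReal.ofReal (t ^ 2) * μ {ω | t ≤ W i ω} :=
  stmt_0_general μ n W hident hsum x hx i
end

section
/- Let (m_n)_{n≥1} be a sequence of positive integers with m_n/√n → 0 as n → ∞, and for each n let p_n := P(W_n = m_n) where W_n has the binomial distribution with n trials and success probability 1/n. Then e · m_n! · p_n → 1 as n → ∞. -/
/-!
Writing `m = m_n` and `q = 1 - 1/n`, and using `m! · C(n, m) = n(n-1)⋯(n-m+1)`,
`e · m! · p_n = e qⁿ · (n(n-1)⋯(n-m+1) / nᵐ) / qᵐ`. The first factor tends to `1` since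
`qⁿ → e⁻¹`. The other two lie between `(1 - m/n)ᵐ` resp. `(1 - 1/n)ᵐ` and `1`, and
Bernoulli's inequality `(1 - x)ᵏ ≥ 1 - k x` squeezes both to `1` because `m²/n → 0`.
-/

open Filter Topology

lemma tendsto_one_sub_pow_of_tendsto_mul {α : Type*} {l : Filter α} {x : α → ℝ} {k : α → ℕ}
    (hx : ∀ᶠ a in l, 0 ≤ x a ∧ x a ≤ 1) (hkx : Tendsto (fun a => k a * x a) l (𝓝 0)) :
    Tendsto (fun a => (1 - x a) ^ k a) l (𝓝 1) := by
  have hlow : Tendsto (fun a => 1 - k a * x a) l (𝓝 1) := by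
    simpa using tendsto_const_nhds.sub hkx
  refine tendsto_of_tendsto_of_tendsto_of_le_of_le' hlow tendsto_const_nhds ?_ ?_
  · filter_upwards [hx] with a ⟨_, hx1⟩
    simpa [sub_eq_add_neg] using one_add_mul_le_pow (a := -x a) (by linarith) (k a)
  · filter_upwards [hx] with a ⟨hx0, hx1⟩
    exact pow_le_one₀ (by linarith) (by linarith)

lemma one_sub_div_pow_le_descFactorial_div_pow {n m : ℕ} (hmn : m ≤ n) :
    (1 - (m : ℝ) / n) ^ m ≤ n.descFactorial m / (n : ℝ) ^ m := by
  rcases Nat.eq_zero_or_pos n with rfl | hn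
  · obtain rfl : m = 0 := Nat.le_zero.mp hmn
    simp
  have hsub : ((n - m : ℕ) : ℝ) ^ m ≤ n.descFactorial m := by
    exact_mod_cast (Nat.pow_le_pow_left (by omega) m).trans (Nat.pow_sub_le_descFactorial n m)
  rw [le_div_iff₀ (by positivity), ← mul_pow, sub_mul, div_mul_cancel₀ _ (by positivity), one_mul]
  simpa [Nat.cast_sub hmn] using hsub

lemma descFactorial_div_pow_le_one (n m : ℕ) : (n.descFactorial m : ℝ) / (n : ℝ) ^ m ≤ 1 :=
  div_le_one_of_le₀ (by exact_mod_cast Nat.descFactorial_le_pow n m) (by positivity)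

lemma tendsto_sq_div_of_tendsto_div_sqrt {x : ℕ → ℝ}
    (hx : Tendsto (fun n : ℕ => x n / Real.sqrt n) atTop (𝓝 0)) :
    Tendsto (fun n : ℕ => x n ^ 2 / n) atTop (𝓝 0) := by
  simpa [div_pow, Real.sq_sqrt (Nat.cast_nonneg _)] using hx.pow 2

lemma tendsto_descFactorial_div_pow {m : ℕ → ℕ}
    (hm : Tendsto (fun n : ℕ => (m n : ℝ) ^ 2 / n) atTop (𝓝 0)) (hmn : ∀ᶠ n in atTop, m n ≤ n) :
    Tendsto (fun n : ℕ => (n.descFactorial (m n) : ℝ) / (n : ℝ) ^ m n) atTop (𝓝 1) := by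
  have hlow : Tendsto (fun n : ℕ => (1 - (m n : ℝ) / n) ^ m n) atTop (𝓝 1) := by
    refine tendsto_one_sub_pow_of_tendsto_mul ?_ (hm.congr fun n => by ring)
    filter_upwards [hmn] with n hn
    exact ⟨by positivity, div_le_one_of_le₀ (by exact_mod_cast hn) (by positivity)⟩
  refine tendsto_of_tendsto_of_tendsto_of_le_of_le' hlow tendsto_const_nhds ?_
    (Eventually.of_forall fun n => descFactorial_div_pow_le_one n (m n))
  filter_upwards [hmn] with n hn
  exact one_sub_div_pow_le_descFactorial_div_pow hn

lemma factorial_mul_choose_mul_pow_mul_pow_sub {n m : ℕ} (hmn : m ≤ n) {x : ℝ} (hx : x ≠ 0)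
    (y : ℝ) :
    (m.factorial : ℝ) * (n.choose m * y ^ m * x ^ (n - m)) =
      n.descFactorial m * y ^ m * x ^ n / x ^ m := by
  rw [Nat.descFactorial_eq_factorial_mul_choose, pow_sub₀ x hx hmn]
  push_cast
  ring

theorem stmt_7_general (m : ℕ → ℕ)
    (hlim : Tendsto (fun n : ℕ => (m n : ℝ) / Real.sqrt n) atTop (nhds 0)) :
    Tendsto (fun n : ℕ =>
      Real.exp 1 * (Nat.factorial (m n) : ℝ) *
        ((n.choose (m n) : ℝ) * (1 / n : ℝ) ^ (m n) * (1 - 1 / n : ℝ) ^ (n - m n)))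
      atTop (nhds 1) := by
  have hsq := tendsto_sq_div_of_tendsto_div_sqrt hlim
  have hlin : Tendsto (fun n : ℕ => (m n : ℝ) * (1 / n)) atTop (𝓝 0) := by
    refine squeeze_zero (fun n => by positivity) (fun n => ?_) hsq
    rw [mul_one_div]
    gcongr
    exact_mod_cast Nat.le_self_pow two_ne_zero (m n)
  have hmn : ∀ᶠ n in atTop, m n ≤ n := by
    filter_upwards [hlin.eventually_lt_const one_pos, eventually_gt_atTop 0] with n h hn
    rw [mul_one_div, div_lt_one (by positivity)] at h
    exact_mod_cast h.le
  have hexp : Tendsto (fun n : ℕ => Real.exp 1 * (1 - 1 / n : ℝ) ^ n) atTop (𝓝 1) := by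
    simpa [← Real.exp_add, ← sub_eq_add_neg, neg_div] using
      (Real.tendsto_one_add_div_pow_exp (-1)).const_mul (Real.exp 1)
  have hdesc := tendsto_descFactorial_div_pow hsq hmn
  have hpow : Tendsto (fun n : ℕ => (1 - 1 / n : ℝ) ^ m n) atTop (𝓝 1) :=
    tendsto_one_sub_pow_of_tendsto_mul
      (Eventually.of_forall fun n => ⟨by positivity, by simpa using Nat.cast_inv_le_one n⟩) hlin
  have hquot := (hexp.mul hdesc).div hpow one_ne_zero
  rw [mul_one, div_one] at hquot
  refine hquot.congr' ?_
  filter_upwards [hmn, eventually_ge_atTop 2] with n hn hn2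
  have hq : (1 - 1 / n : ℝ) ≠ 0 :=
    (sub_pos.mpr ((div_lt_one (by positivity)).mpr (by exact_mod_cast hn2))).ne'
  rw [mul_assoc, factorial_mul_choose_mul_pow_mul_pow_sub hn hq, Pi.div_apply]
  ring

/-- If `(m_n)` are positive integers with `m_n/√n → 0`, and
`p_n = P(W_n = m_n)` with `W_n ~ Binomial(n, 1/n)`
(so `p_n = C(n, m_n) (1/n)^{m_n} (1 - 1/n)^{n - m_n}`), then `e · m_n! · p_n → 1`. -/
theorem stmt_7 (m : ℕ → ℕ) (hm : ∀ n, 1 ≤ m n)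
    (hlim : Tendsto (fun n : ℕ => (m n : ℝ) / Real.sqrt n) atTop (nhds 0)) :
    Tendsto (fun n : ℕ =>
      Real.exp 1 * (Nat.factorial (m n) : ℝ) *
        ((n.choose (m n) : ℝ) * (1 / n : ℝ) ^ (m n) * (1 - 1 / n : ℝ) ^ (n - m n)))
      atTop (nhds 1) :=
  stmt_7_general m hlim
end

section
/- Let n ≥ 1, let M be a random variable with the binomial distribution with n trials and success probability 1/n, and let W be a random variable whose conditional distribution given M = m is binomial with n trials and success probability m/n (this is the first coordinate of the double-bootstrap weight vector). Then for every λ > 0, E[e^{λ W}] ≤ exp(e^{e^{λ} - 1} - 1). Moreover, E[e^{λ W} | M] = (1 + (M/n)(e^{λ} - 1))^n ≤ exp((e^{λ} - 1) M) almost surely. -/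
/-!
Conditionally on `M = m`, `W` is binomial, so `E[s ^ W | M = m] = (1 + (m / n) (s - 1)) ^ n`
(binomial probability generating function), and `1 + x ≤ eˣ` bounds this by `exp ((s - 1) m)`.
With `s = e^λ` this is `(e^{e^λ - 1}) ^ m`, and averaging over `M ~ Binomial(n, 1/n)` is the
generating function of `M` at `e^{e^λ - 1}`, which the same inequality bounds by
`exp (e^{e^λ - 1} - 1)`.
-/

open MeasureTheory

theorem integral_comp_eq_sum_of_measure_preimage_eq_zero {Ω α : Type*} [MeasurableSpace Ω]
    [MeasurableSpace α] [MeasurableSingletonClass α] [Countable α] {μ : Measure Ω}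
    [IsFiniteMeasure μ] {X : Ω → α} (hX : Measurable X) {S : Finset α}
    (hS : ∀ x ∉ S, μ (X ⁻¹' {x}) = 0) (f : α → ℝ) :
    ∫ ω, f (X ω) ∂μ = ∑ x ∈ S, μ.real (X ⁻¹' {x}) * f x := by
  have hSupp : ∀ᵐ x ∂μ.map X, x ∈ (S : Set α) := by
    refine ae_iff_of_countable.mpr fun x hx => ?_
    by_contra hxS
    exact hx ((Measure.map_apply hX (measurableSet_singleton x)).trans (hS x hxS))
  rw [← integral_map hX.aemeasurable (measurable_of_countable f).aestronglyMeasurable,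
    ← Measure.restrict_eq_self_of_ae_mem hSupp, setIntegral_finset S IntegrableOn.finset]
  simp [map_measureReal_apply hX (measurableSet_singleton _)]

lemma one_add_div_mul_pow_le_exp (n : ℕ) {x t : ℝ} (hx : 0 ≤ x) (ht : 0 ≤ t) :
    (1 + x / n * t) ^ n ≤ Real.exp (t * x) := by
  have h := Real.one_sub_div_pow_le_exp_neg (n := n) (t := -(t * x))
    (by linarith [mul_nonneg ht hx, n.cast_nonneg (α := ℝ)])
  rw [neg_neg] at h
  convert h using 2
  ring

def binomialProb (n : ℕ) (q : ℝ) (k : ℕ) : ℝ := n.choose k * q ^ k * (1 - q) ^ (n - k)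

lemma binomialProb_eq_zero_of_lt {n k : ℕ} (q : ℝ) (h : n < k) : binomialProb n q k = 0 := by
  simp [binomialProb, Nat.choose_eq_zero_of_lt h]

lemma sum_binomialProb_mul_pow (n : ℕ) (q s : ℝ) :
    ∑ k ∈ Finset.range (n + 1), binomialProb n q k * s ^ k = (1 + q * (s - 1)) ^ n := by
  rw [show 1 + q * (s - 1) = q * s + (1 - q) by ring, add_pow]
  refine Finset.sum_congr rfl fun k _ => ?_
  rw [binomialProb]
  ring

def IsDoubleBootstrapLaw {Ω : Type*} [MeasurableSpace Ω] (μ : Measure Ω) (n : ℕ)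
    (M W : Ω → ℕ) : Prop :=
  ∀ m k : ℕ, μ.real ({ω | M ω = m} ∩ {ω | W ω = k}) =
    binomialProb n (1 / n) m * binomialProb n (m / n) k

namespace IsDoubleBootstrapLaw

variable {Ω : Type*} [MeasurableSpace Ω] {μ : Measure Ω} {n : ℕ} {M W : Ω → ℕ}

lemma sum_measureReal_inter_mul_pow (h : IsDoubleBootstrapLaw μ n M W) (m : ℕ) (s : ℝ) :
    ∑ k ∈ Finset.range (n + 1), μ.real ({ω | M ω = m} ∩ {ω | W ω = k}) * s ^ k =
      binomialProb n (1 / n) m * (1 + m / n * (s - 1)) ^ n := by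
  simp_rw [h m, mul_assoc, ← Finset.mul_sum, sum_binomialProb_mul_pow]

variable [IsFiniteMeasure μ]

lemma measure_inter_eq_zero (h : IsDoubleBootstrapLaw μ n M W) {m k : ℕ} (hmk : n < m ∨ n < k) :
    μ ({ω | M ω = m} ∩ {ω | W ω = k}) = 0 := by
  rw [← measureReal_eq_zero_iff, h]
  rcases hmk with hmk | hmk <;> simp [binomialProb_eq_zero_of_lt _ hmk]

lemma setIntegral_pow (h : IsDoubleBootstrapLaw μ n M W) (hW : Measurable W) (m : ℕ) (s : ℝ) :
    ∫ ω in {ω | M ω = m}, s ^ W ω ∂μ = binomialProb n (1 / n) m * (1 + m / n * (s - 1)) ^ n := by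
  rw [integral_comp_eq_sum_of_measure_preimage_eq_zero hW (S := Finset.range (n + 1))
    (fun k hk => ?_) (s ^ ·), ← h.sum_measureReal_inter_mul_pow]
  · refine Finset.sum_congr rfl fun k _ => ?_
    rw [measureReal_restrict_apply (hW (measurableSet_singleton k)), Set.inter_comm]
    rfl
  · rw [Measure.restrict_apply (hW (measurableSet_singleton k)), Set.inter_comm]
    exact h.measure_inter_eq_zero (.inr (by simpa using hk))

lemma measureReal_eq (h : IsDoubleBootstrapLaw μ n M W) (hW : Measurable W) (m : ℕ) :
    μ.real {ω | M ω = m} = binomialProb n (1 / n) m := by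
  simpa using h.setIntegral_pow hW m 1

lemma integral_pow (h : IsDoubleBootstrapLaw μ n M W) (hM : Measurable M) (hW : Measurable W)
    (s : ℝ) : ∫ ω, s ^ W ω ∂μ =
      ∑ m ∈ Finset.range (n + 1), binomialProb n (1 / n) m * (1 + m / n * (s - 1)) ^ n := by
  rw [integral_comp_eq_sum_of_measure_preimage_eq_zero (hM.prodMk hW)
    (S := Finset.range (n + 1) ×ˢ Finset.range (n + 1)) (fun x hx => ?_) (fun x => s ^ x.2),
    Finset.sum_product]
  · simp_rw [← Set.singleton_prod_singleton, Set.mk_preimage_prod]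
    exact Finset.sum_congr rfl fun m _ => h.sum_measureReal_inter_mul_pow m s
  · obtain ⟨m, k⟩ := x
    rw [← Set.singleton_prod_singleton, Set.mk_preimage_prod]
    exact h.measure_inter_eq_zero (by simp_all [Finset.mem_product]; omega)

end IsDoubleBootstrapLaw

theorem stmt_8_general {Ω : Type*} [MeasurableSpace Ω] (μ : Measure Ω) [IsProbabilityMeasure μ]
    (n : ℕ) (M W : Ω → ℕ) (hM : Measurable M) (hW : Measurable W)
    (hjoint : ∀ m k : ℕ,
      (μ ({ω | M ω = m} ∩ {ω | W ω = k})).toReal =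
        ((n.choose m : ℝ) * (1 / n : ℝ) ^ m * (1 - 1 / n : ℝ) ^ (n - m)) *
          ((n.choose k : ℝ) * ((m : ℝ) / n) ^ k * (1 - (m : ℝ) / n) ^ (n - k)))
    (l : ℝ) (hl : 0 < l) :
    (∫ ω, Real.exp (l * W ω) ∂μ ≤ Real.exp (Real.exp (Real.exp l - 1) - 1)) ∧
    ∀ m : ℕ,
      (∫ ω in {ω | M ω = m}, Real.exp (l * W ω) ∂μ =
        (μ {ω | M ω = m}).toReal * (1 + ((m : ℝ) / n) * (Real.exp l - 1)) ^ n) ∧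
      (∫ ω in {ω | M ω = m}, Real.exp (l * W ω) ∂μ ≤
        (μ {ω | M ω = m}).toReal * Real.exp ((Real.exp l - 1) * m)) := by
  have h : IsDoubleBootstrapLaw μ n M W := hjoint
  have hexp (ω : Ω) : Real.exp (l * W ω) = Real.exp l ^ W ω := by
    rw [← Real.exp_nat_mul, mul_comm]
  have ht : 0 ≤ Real.exp l - 1 := sub_nonneg.mpr (Real.one_le_exp hl.le)
  have hatom (m : ℕ) := one_add_div_mul_pow_le_exp n m.cast_nonneg ht
  have hp_nonneg (m : ℕ) := h.measureReal_eq hW m ▸ measureReal_nonneg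
  simp_rw [hexp, ← measureReal_def, h.setIntegral_pow hW, h.measureReal_eq hW]
  refine ⟨?_, fun m => ⟨trivial, mul_le_mul_of_nonneg_left (hatom m) (hp_nonneg m)⟩⟩
  set s := Real.exp (Real.exp l - 1)
  calc ∫ ω, Real.exp l ^ W ω ∂μ
      = ∑ m ∈ Finset.range (n + 1), binomialProb n (1 / n) m *
          (1 + m / n * (Real.exp l - 1)) ^ n := h.integral_pow hM hW _
    _ ≤ ∑ m ∈ Finset.range (n + 1), binomialProb n (1 / n) m * s ^ m := by
        refine Finset.sum_le_sum fun m _ => ?_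
        rw [← Real.exp_nat_mul, mul_comm (m : ℝ)]
        exact mul_le_mul_of_nonneg_left (hatom m) (hp_nonneg m)
    _ = (1 + 1 / n * (s - 1)) ^ n := sum_binomialProb_mul_pow n _ s
    _ ≤ Real.exp (s - 1) := by
        simpa using one_add_div_mul_pow_le_exp n zero_le_one (sub_nonneg.mpr (Real.one_le_exp ht))

/-- Double-bootstrap weight: `M ~ Binomial(n, 1/n)` and, conditionally
on `M = m`, `W ~ Binomial(n, m/n)`.  Then for every `λ > 0`,
`E[e^{λW}] ≤ exp(e^{e^λ - 1} - 1)`, and (stated atomwise, i.e. almost surely in `M`)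
`E[e^{λW} | M = m] = (1 + (m/n)(e^λ - 1))^n ≤ exp((e^λ - 1) m)`. -/
theorem stmt_8 {Ω : Type*} [MeasurableSpace Ω] (μ : Measure Ω) [IsProbabilityMeasure μ]
    (n : ℕ) (hn : 1 ≤ n) (M W : Ω → ℕ) (hM : Measurable M) (hW : Measurable W)
    (hjoint : ∀ m k : ℕ,
      (μ ({ω | M ω = m} ∩ {ω | W ω = k})).toReal =
        ((n.choose m : ℝ) * (1 / n : ℝ) ^ m * (1 - 1 / n : ℝ) ^ (n - m)) *
          ((n.choose k : ℝ) * ((m : ℝ) / n) ^ k * (1 - (m : ℝ) / n) ^ (n - k)))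
    (l : ℝ) (hl : 0 < l) :
    (∫ ω, Real.exp (l * W ω) ∂μ ≤ Real.exp (Real.exp (Real.exp l - 1) - 1)) ∧
    ∀ m : ℕ,
      (∫ ω in {ω | M ω = m}, Real.exp (l * W ω) ∂μ =
        (μ {ω | M ω = m}).toReal * (1 + ((m : ℝ) / n) * (Real.exp l - 1)) ^ n) ∧
      (∫ ω in {ω | M ω = m}, Real.exp (l * W ω) ∂μ ≤
        (μ {ω | M ω = m}).toReal * Real.exp ((Real.exp l - 1) * m)) :=
  stmt_8_general μ n M W hM hW hjoint l hl
end

section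
/- Let Y_1, Y_2, … be i.i.d. random variables with P(Y_1 > 0) = 1, finite mean μ := E[Y_1] > 0, and exponential tail P(Y_1 ≥ t) ≤ C e^{-b t} for all t ≥ 0, where C > 0 and b > 0. For each n define the normalized multiplier bootstrap weights W_i := Y_i / ((1/n) ∑_{j=1}^n Y_j) for i = 1, …, n. Then there exists a constant C' > 0, depending only on the distribution of Y_1, such that E[max_{1≤i≤n} W_i] ≤ C' log n for all n ≥ 2; in particular a_n := n^{-1/2} E[max_{1≤i≤n} W_i] ≤ C' (log n)/√n. -/
open MeasureTheory ProbabilityTheory ENNReal Filter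

/-!
Always `max_i W_i ≤ n`. Put `L = (2 / b) log n`. Off the event that some `Y_i ≥ L` or that
`∑ Y_i ≤ n c`, the maximal weight is at most `L / c`. By the tail bound and a union bound the
first event has probability at most `C / n`. Since `Y > 0`, `E[e^{-Y}] < 1`, so for small
`c > 0` the Chernoff bound for the lower tail of the sum gives probability at most `q ^ n` with
`q = e^c E[e^{-Y}] < 1`. Hence `E[max_i W_i] ≤ (2 / (b c)) log n + C + n q ^ n`, and `n q ^ n`
is bounded.
-/

noncomputable def maxBootstrapWeight (y : ℕ → ℝ) (n : ℕ) : ℝ :=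
  ⨆ i : Fin n, y i / ((1 / n : ℝ) * ∑ j ∈ Finset.range n, y j)

lemma maxBootstrapWeight_le_card {y : ℕ → ℝ} {n : ℕ} (hn : 0 < n) (hy : ∀ j < n, 0 < y j) :
    maxBootstrapWeight y n ≤ n := by
  have hsum : 0 < ∑ j ∈ Finset.range n, y j :=
    Finset.sum_pos (fun j hj => hy j (Finset.mem_range.mp hj)) ⟨0, Finset.mem_range.mpr hn⟩
  refine Real.iSup_le (fun i => ?_) n.cast_nonneg
  rw [div_le_iff₀ (by positivity), one_div, mul_inv_cancel_left₀ (by positivity)]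
  exact Finset.single_le_sum (fun j hj => (hy j (Finset.mem_range.mp hj)).le)
    (Finset.mem_range.mpr i.isLt)

lemma maxBootstrapWeight_le_div {y : ℕ → ℝ} {n : ℕ} {c L : ℝ} (hn : 0 < n) (hc : 0 < c)
    (hL : 0 ≤ L) (hy : ∀ i < n, y i ≤ L) (hsum : n * c ≤ ∑ j ∈ Finset.range n, y j) :
    maxBootstrapWeight y n ≤ L / c := by
  have hmean : c ≤ (1 / n : ℝ) * ∑ j ∈ Finset.range n, y j := by
    rw [one_div, ← div_eq_inv_mul, le_div_iff₀ (by positivity)]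
    linarith
  exact Real.iSup_le (fun i => div_le_div₀ hL (hy i i.isLt) hc hmean) (div_nonneg hL hc.le)

section

variable {Ω : Type*} [MeasurableSpace Ω]

lemma lintegral_le_add_mul_measure {μ : Measure Ω} [IsProbabilityMeasure μ] {f : Ω → ℝ≥0∞}
    {a M : ℝ≥0∞} {B : Set Ω} (hM : ∀ᵐ ω ∂μ, f ω ≤ M) (ha : ∀ᵐ ω ∂μ, ω ∉ B → f ω ≤ a) :
    ∫⁻ ω, f ω ∂μ ≤ a + M * μ B :=
  calc ∫⁻ ω, f ω ∂μ ≤ ∫⁻ ω, a + B.indicator (fun _ => M) ω ∂μ := by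
        refine lintegral_mono_ae ?_
        filter_upwards [hM, ha] with ω hωM hωa
        by_cases hω : ω ∈ B
        · simpa [hω] using le_add_left hωM
        · simpa [hω] using hωa hω
    _ = a + ∫⁻ ω, B.indicator (fun _ => M) ω ∂μ := by
        rw [lintegral_add_left measurable_const, lintegral_const, measure_univ, mul_one]
    _ ≤ a + M * μ B := add_le_add_right (lintegral_indicator_const_le B M) a

lemma mgf_lt_one {μ : Measure Ω} [IsProbabilityMeasure μ] {X : Ω → ℝ} {t : ℝ}
    (hX : AEMeasurable X μ) (hpos : ∀ᵐ ω ∂μ, 0 < X ω) (ht : t < 0) : mgf X μ t < 1 := by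
  have hle : ∀ᵐ ω ∂μ, Real.exp (t * X ω) ≤ 1 := hpos.mono fun ω hω =>
    Real.exp_le_one_iff.mpr (mul_nonpos_of_nonpos_of_nonneg ht.le hω.le)
  have hint : Integrable (fun ω => Real.exp (t * X ω)) μ := by
    refine (integrable_const 1).mono' (by fun_prop) ?_
    filter_upwards [hle] with ω hω
    rwa [Real.norm_of_nonneg (Real.exp_pos _).le]
  have hgap : 0 < ∫ ω, (1 - Real.exp (t * X ω)) ∂μ := by
    rw [integral_pos_iff_support_of_nonneg_ae (hle.mono fun ω hω => sub_nonneg.mpr hω)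
      ((integrable_const 1).sub hint), pos_iff_ne_zero, Ne, measure_eq_zero_iff_ae_notMem]
    intro h
    obtain ⟨ω, hω, hωpos⟩ := (h.and hpos).exists
    exact hω (sub_ne_zero.mpr (Real.exp_lt_one_iff.mpr (mul_neg_of_neg_of_pos ht hωpos)).ne')
  rw [integral_sub (integrable_const 1) hint, integral_const, probReal_univ, one_smul] at hgap
  exact sub_pos.mp hgap

variable {P : Measure Ω} {Y : ℕ → Ω → ℝ}

lemma measure_exists_le_le_of_identDistrib (hident : ∀ i, IdentDistrib (Y i) (Y 0) P P)
    {t : ℝ} {a : ℝ≥0∞} (htail : P {ω | t ≤ Y 0 ω} ≤ a) (n : ℕ) :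
    P {ω | ∃ i < n, t ≤ Y i ω} ≤ n * a :=
  calc P {ω | ∃ i < n, t ≤ Y i ω} = P (⋃ i ∈ Finset.range n, Y i ⁻¹' Set.Ici t) := by
        congr 1; ext ω; simp
    _ ≤ ∑ i ∈ Finset.range n, P (Y i ⁻¹' Set.Ici t) := measure_biUnion_finset_le _ _
    _ ≤ ∑ _i ∈ Finset.range n, a := Finset.sum_le_sum fun i _ => by
        rw [(hident i).measure_mem_eq measurableSet_Ici]; exact htail
    _ = n * a := by rw [Finset.sum_const, Finset.card_range, nsmul_eq_mul]

lemma measure_sum_le_le_pow (hmeas : ∀ i, Measurable (Y i)) (hindep : iIndepFun Y P)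
    (hident : ∀ i, IdentDistrib (Y i) (Y 0) P P) (hnonneg : ∀ᵐ ω ∂P, ∀ i, 0 ≤ Y i ω)
    {t : ℝ} (ht : t ≤ 0) (n : ℕ) (c : ℝ) :
    P {ω | ∑ j ∈ Finset.range n, Y j ω ≤ n * c} ≤
      ENNReal.ofReal ((Real.exp (-t * c) * mgf (Y 0) P t) ^ n) := by
  have := hindep.isProbabilityMeasure
  set S := ∑ j ∈ Finset.range n, Y j
  have hS : ∀ ω, S ω = ∑ j ∈ Finset.range n, Y j ω := fun ω => Finset.sum_apply ω _ _
  have hint : Integrable (fun ω => Real.exp (t * S ω)) P := by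
    refine (integrable_const 1).mono' (by fun_prop) ?_
    filter_upwards [hnonneg] with ω hω
    rw [Real.norm_of_nonneg (Real.exp_pos _).le, Real.exp_le_one_iff, hS]
    exact mul_nonpos_of_nonpos_of_nonneg ht (Finset.sum_nonneg fun j _ => hω j)
  have hmgf : mgf S P t = mgf (Y 0) P t ^ n := by
    rw [hindep.mgf_sum hmeas, Finset.prod_eq_pow_card fun i _ =>
      mgf_congr_of_identDistrib _ _ (hident i) t, Finset.card_range]
  have hchernoff := measure_le_le_exp_mul_mgf (n * c) ht hint
  simp only [hS] at hchernoff
  rw [← ofReal_measureReal]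
  refine ENNReal.ofReal_le_ofReal (hchernoff.trans_eq ?_)
  rw [hmgf, mul_pow, ← Real.exp_nat_mul]
  ring_nf

lemma natCast_mul_measure_exists_ge_le (hident : ∀ i, IdentDistrib (Y i) (Y 0) P P) {C b : ℝ}
    (hb : 0 < b)
    (htail : ∀ t : ℝ, 0 ≤ t → P {ω | t ≤ Y 0 ω} ≤ ENNReal.ofReal (C * Real.exp (-b * t)))
    {n : ℕ} (hn : 0 < n) :
    (n : ℝ≥0∞) * P {ω | ∃ i < n, 2 / b * Real.log n ≤ Y i ω} ≤ ENNReal.ofReal C := by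
  have hL : 0 ≤ 2 / b * Real.log n := by have := Real.log_natCast_nonneg n; positivity
  have hexp : Real.exp (-b * (2 / b * Real.log n)) = ((n : ℝ) ^ 2)⁻¹ := by
    rw [← Real.exp_log (pow_pos (Nat.cast_pos.mpr hn) 2), ← Real.exp_neg, Real.log_pow]
    field_simp
    push_cast
    ring_nf
  calc (n : ℝ≥0∞) * P {ω | ∃ i < n, 2 / b * Real.log n ≤ Y i ω}
      ≤ n * (n * ENNReal.ofReal (C * Real.exp (-b * (2 / b * Real.log n)))) := by
        gcongr
        exact measure_exists_le_le_of_identDistrib hident (htail _ hL) n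
    _ = ENNReal.ofReal C := by
        rw [← ofReal_natCast, ← ofReal_mul n.cast_nonneg, ← ofReal_mul n.cast_nonneg, hexp]
        congr 1
        field_simp

lemma lintegral_maxBootstrapWeight_le (hmeas : ∀ i, Measurable (Y i)) (hindep : iIndepFun Y P)
    (hident : ∀ i, IdentDistrib (Y i) (Y 0) P P) (hpos : ∀ᵐ ω ∂P, ∀ i, 0 < Y i ω)
    {C b : ℝ} (hC : 0 ≤ C) (hb : 0 < b)
    (htail : ∀ t : ℝ, 0 ≤ t → P {ω | t ≤ Y 0 ω} ≤ ENNReal.ofReal (C * Real.exp (-b * t)))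
    {c : ℝ} (hc : 0 < c) {n : ℕ} (hn : 0 < n) :
    ∫⁻ ω, ENNReal.ofReal (maxBootstrapWeight (fun j => Y j ω) n) ∂P ≤
      ENNReal.ofReal (2 / (b * c) * Real.log n + C +
        n * (Real.exp c * mgf (Y 0) P (-1)) ^ n) := by
  have := hindep.isProbabilityMeasure
  set L := 2 / b * Real.log n
  set q := Real.exp c * mgf (Y 0) P (-1)
  have hL : 0 ≤ L := by have := Real.log_natCast_nonneg n; positivity
  have hq : 0 ≤ q := mul_nonneg (Real.exp_pos c).le mgf_nonneg
  set B₁ := {ω | ∃ i < n, L ≤ Y i ω}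
  set B₂ := {ω | ∑ j ∈ Finset.range n, Y j ω ≤ n * c}
  have hmax : ∀ᵐ ω ∂P, ENNReal.ofReal (maxBootstrapWeight (fun j => Y j ω) n) ≤ n :=
    hpos.mono fun ω hω => by
      simpa using ENNReal.ofReal_le_ofReal (maxBootstrapWeight_le_card hn fun j _ => hω j)
  have hgood : ∀ᵐ ω ∂P, ω ∉ B₁ ∪ B₂ →
      ENNReal.ofReal (maxBootstrapWeight (fun j => Y j ω) n) ≤ ENNReal.ofReal (L / c) :=
    Eventually.of_forall fun ω hω => by
      simp only [B₁, B₂, Set.mem_union, Set.mem_ofPred_eq, not_or, not_exists, not_and,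
        not_le] at hω
      exact ofReal_le_ofReal
        (maxBootstrapWeight_le_div hn hc hL (fun i hi => (hω.1 i hi).le) hω.2.le)
  have hB₂ : (n : ℝ≥0∞) * P B₂ ≤ ENNReal.ofReal (n * q ^ n) := by
    have hchernoff := measure_sum_le_le_pow hmeas hindep hident
      (hpos.mono fun ω hω i => (hω i).le) (t := -1) (by norm_num) n c
    rw [neg_neg, one_mul] at hchernoff
    rw [ofReal_mul n.cast_nonneg, ofReal_natCast]
    gcongr
  calc ∫⁻ ω, ENNReal.ofReal (maxBootstrapWeight (fun j => Y j ω) n) ∂P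
      ≤ ENNReal.ofReal (L / c) + n * P (B₁ ∪ B₂) := lintegral_le_add_mul_measure hmax hgood
    _ ≤ ENNReal.ofReal (L / c) + (ENNReal.ofReal C + ENNReal.ofReal (n * q ^ n)) := by
        gcongr
        calc (n : ℝ≥0∞) * P (B₁ ∪ B₂) ≤ n * (P B₁ + P B₂) := by
              gcongr; exact measure_union_le _ _
          _ ≤ _ := by
              rw [mul_add]
              exact add_le_add (natCast_mul_measure_exists_ge_le hident hb htail hn) hB₂
    _ = _ := by
        rw [← ofReal_add hC (mul_nonneg n.cast_nonneg (pow_nonneg hq n)),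
          ← ofReal_add (div_nonneg hL hc.le) (by positivity)]
        congr 1
        ring

end

lemma exists_pos_exp_mul_lt_one {ρ : ℝ} (h0 : 0 ≤ ρ) (h1 : ρ < 1) :
    ∃ c > 0, Real.exp c * ρ < 1 := by
  refine ⟨Real.log (2 / (1 + ρ)), Real.log_pos ?_, ?_⟩
  · rw [one_lt_div (by positivity)]; linarith
  · rw [Real.exp_log (by positivity), div_mul_eq_mul_div, div_lt_one (by positivity)]
    linarith

theorem stmt_9_general {Ω : Type*} [MeasurableSpace Ω] (P : Measure Ω) [IsProbabilityMeasure P]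
    (Y : ℕ → Ω → ℝ) (hmeas : ∀ i, Measurable (Y i))
    (hindep : iIndepFun Y P)
    (hident : ∀ i, IdentDistrib (Y i) (Y 0) P P)
    (hpos : ∀ᵐ ω ∂P, 0 < Y 0 ω)
    (C b : ℝ) (hC : 0 < C) (hb : 0 < b)
    (htail : ∀ t : ℝ, 0 ≤ t → P {ω | t ≤ Y 0 ω} ≤ ENNReal.ofReal (C * Real.exp (-b * t))) :
    ∃ C' > (0 : ℝ), ∀ n : ℕ, 2 ≤ n →
      (∫⁻ ω, ENNReal.ofReal
          (⨆ i : Fin n, Y i ω / ((1 / n : ℝ) * ∑ j ∈ Finset.range n, Y j ω)) ∂P ≤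
        ENNReal.ofReal (C' * Real.log n)) ∧
      (∫⁻ ω, ENNReal.ofReal
          (⨆ i : Fin n, Y i ω / ((1 / n : ℝ) * ∑ j ∈ Finset.range n, Y j ω)) ∂P) /
          ENNReal.ofReal (Real.sqrt n) ≤
        ENNReal.ofReal (C' * Real.log n / Real.sqrt n) := by
  have hpos_all : ∀ᵐ ω ∂P, ∀ i, 0 < Y i ω :=
    ae_all_iff.mpr fun i => (hident i).symm.ae_snd measurableSet_Ioi hpos
  obtain ⟨c, hc, hq1⟩ := exists_pos_exp_mul_lt_one mgf_nonneg
    (mgf_lt_one (hmeas 0).aemeasurable hpos (t := -1) (by norm_num))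
  set q := Real.exp c * mgf (Y 0) P (-1)
  have hq0 : 0 ≤ q := mul_nonneg (Real.exp_pos c).le mgf_nonneg
  obtain ⟨A, hA⟩ := (tendsto_self_mul_const_pow_of_lt_one hq0 hq1).bddAbove_range
  have hA0 : 0 ≤ A := by simpa using hA ⟨0, rfl⟩
  refine ⟨2 / (b * c) + (C + A) / Real.log 2, by positivity, fun n hn => ?_⟩
  have hlog : 1 ≤ Real.log n / Real.log 2 := by
    rw [one_le_div (Real.log_pos one_lt_two)]
    exact Real.log_le_log two_pos (by exact_mod_cast hn)
  have hbound : 2 / (b * c) * Real.log n + C + n * q ^ n ≤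
      (2 / (b * c) + (C + A) / Real.log 2) * Real.log n := by
    have hqn : n * q ^ n ≤ A := hA ⟨n, rfl⟩
    have := le_mul_of_one_le_right (by positivity : 0 ≤ C + A) hlog
    calc 2 / (b * c) * Real.log n + C + n * q ^ n
        ≤ 2 / (b * c) * Real.log n + (C + A) * (Real.log n / Real.log 2) := by linarith
      _ = (2 / (b * c) + (C + A) / Real.log 2) * Real.log n := by ring
  have hmain := (lintegral_maxBootstrapWeight_le hmeas hindep hident hpos_all hC.le hb htail hc
    (n := n) (by omega)).trans (ENNReal.ofReal_le_ofReal hbound)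
  refine ⟨hmain, ?_⟩
  rw [ENNReal.ofReal_div_of_pos (Real.sqrt_pos.mpr (by positivity))]
  exact ENNReal.div_le_div_right hmain _

/-- Let `Y_1, Y_2, …` be i.i.d., almost surely positive, with positive
finite mean and exponential tail `P(Y ≥ t) ≤ C e^{-bt}`.  For the normalized multiplier
bootstrap weights `W_i = Y_i / ((1/n) ∑_{j<n} Y_j)`, there is a constant `C' > 0`
(depending only on the distribution of `Y_1`) with `E[max_{i<n} W_i] ≤ C' log n`
for all `n ≥ 2`; in particular `a_n = n^{-1/2} E[max_i W_i] ≤ C' (log n)/√n`. -/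
theorem stmt_9 {Ω : Type*} [MeasurableSpace Ω] (P : Measure Ω) [IsProbabilityMeasure P]
    (Y : ℕ → Ω → ℝ) (hmeas : ∀ i, Measurable (Y i))
    (hindep : iIndepFun Y P)
    (hident : ∀ i, IdentDistrib (Y i) (Y 0) P P)
    (hpos : ∀ᵐ ω ∂P, 0 < Y 0 ω)
    (hint : Integrable (Y 0) P) (hmean : 0 < ∫ ω, Y 0 ω ∂P)
    (C b : ℝ) (hC : 0 < C) (hb : 0 < b)
    (htail : ∀ t : ℝ, 0 ≤ t → P {ω | t ≤ Y 0 ω} ≤ ENNReal.ofReal (C * Real.exp (-b * t))) :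
    ∃ C' > (0 : ℝ), ∀ n : ℕ, 2 ≤ n →
      (∫⁻ ω, ENNReal.ofReal
          (⨆ i : Fin n, Y i ω / ((1 / n : ℝ) * ∑ j ∈ Finset.range n, Y j ω)) ∂P ≤
        ENNReal.ofReal (C' * Real.log n)) ∧
      (∫⁻ ω, ENNReal.ofReal
          (⨆ i : Fin n, Y i ω / ((1 / n : ℝ) * ∑ j ∈ Finset.range n, Y j ω)) ∂P) /
          ENNReal.ofReal (Real.sqrt n) ≤
        ENNReal.ofReal (C' * Real.log n / Real.sqrt n) :=
  stmt_9_general P Y hmeas hindep hident hpos C b hC hb htail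
end

section
/- Let n ≥ 2 and let (W_1, …, W_n) be an exchangeable random vector of square-integrable real random variables satisfying ∑_{i=1}^n W_i = n almost surely. Let I ⊆ {1, …, n} be a deterministic subset of cardinality m ≥ 1 and let (b_i)_{i∈I} be deterministic real numbers. Then E[(∑_{i∈I} (W_i - 1) b_i)²] = E[(W_1 - 1)²] · (∑_{i∈I} b_i² - (1/(n-1)) ∑_{i,ℓ∈I, i≠ℓ} b_i b_ℓ) ≤ (1 + (m-1)/(n-1)) · E[(W_1 - 1)²] · ∑_{i∈I} b_i² ≤ 2 · E[(W_1 - 1)²] · ∑_{i∈I} b_i². -/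
/-!
Write `Z i = W i - 1`. By exchangeability, `E[Z_i ^ 2] = v` and `E[Z_i Z_l] = c` for `i ≠ l` do
not depend on the indices, while `∑ i, Z i = 0` gives `0 = E[Z_j ∑ i, Z i] = v + (n - 1) c`, so
`c = -v / (n - 1)`; expanding the square of `∑ i ∈ I, Z i b i` yields the identity. The
inequalities follow from `∑_{i ≠ l ∈ I} b_i b_l ≥ -(m - 1) ∑ i ∈ I, b_i ^ 2` (from
`(∑ b_i) ^ 2 ≥ 0` when `m ≥ 2`) and `m ≤ n`.
-/

open MeasureTheory ProbabilityTheory Finset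

section Exchangeable

variable {Ω ι β : Type*} [MeasurableSpace Ω] [MeasurableSpace β]

def Exchangeable (W : ι → Ω → β) (μ : Measure Ω) : Prop :=
  ∀ σ : Equiv.Perm ι, Measure.map (fun ω i => W (σ i) ω) μ = Measure.map (fun ω i => W i ω) μ

variable [Countable ι] {μ : Measure Ω} {W : ι → Ω → β}

lemma Exchangeable.identDistrib_perm (hexch : Exchangeable W μ) (hW : ∀ i, AEMeasurable (W i) μ)
    (σ : Equiv.Perm ι) : IdentDistrib (fun ω i => W (σ i) ω) (fun ω i => W i ω) μ μ where
  aemeasurable_fst := aemeasurable_pi_lambda _ fun i => hW (σ i)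
  aemeasurable_snd := aemeasurable_pi_lambda _ hW
  map_eq := hexch σ

lemma Exchangeable.identDistrib (hexch : Exchangeable W μ) (hW : ∀ i, AEMeasurable (W i) μ)
    (i j : ι) : IdentDistrib (W i) (W j) μ μ := by
  classical
  simpa [Function.comp_def] using
    (hexch.identDistrib_perm hW (Equiv.swap i j)).comp (measurable_pi_apply j)

lemma Exchangeable.identDistrib_pair (hexch : Exchangeable W μ) (hW : ∀ i, AEMeasurable (W i) μ)
    {i l j k : ι} (hil : i ≠ l) (hjk : j ≠ k) :
    IdentDistrib (fun ω => (W i ω, W l ω)) (fun ω => (W j ω, W k ω)) μ μ := by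
  obtain ⟨σ, hσ⟩ := Equiv.Perm.exists_extending_pair ![j, k] ![i, l]
    (injective_pair_iff_ne.2 hjk) (injective_pair_iff_ne.2 hil)
  have hσj : σ j = i := by simpa using hσ 0
  have hσk : σ k = l := by simpa using hσ 1
  simpa [Function.comp_def, hσj, hσk] using
    (hexch.identDistrib_perm hW σ).comp ((measurable_pi_apply j).prodMk (measurable_pi_apply k))

end Exchangeable

theorem Finset.sum_sum_eq_sum_add_sum_sum_sdiff {ι M : Type*} [DecidableEq ι] [AddCommMonoid M]
    (I : Finset ι) (f : ι → ι → M) :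
    ∑ i ∈ I, ∑ l ∈ I, f i l = ∑ i ∈ I, f i i + ∑ i ∈ I, ∑ l ∈ I \ {i}, f i l := by
  rw [← sum_add_distrib]
  exact sum_congr rfl fun i hi => sum_eq_add_sum_sdiff_singleton_of_mem hi _

theorem Finset.neg_card_sub_one_mul_sum_sq_le {ι : Type*} [DecidableEq ι] (I : Finset ι)
    (b : ι → ℝ) : -((#I : ℝ) - 1) * ∑ i ∈ I, b i ^ 2 ≤ ∑ i ∈ I, ∑ l ∈ I \ {i}, b i * b l := by
  rcases le_or_gt #I 1 with hI | hI
  · rcases Nat.le_one_iff_eq_zero_or_eq_one.1 hI with hI | hI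
    · simp [card_eq_zero.1 hI]
    · obtain ⟨a, rfl⟩ := card_eq_one.1 hI
      simp
  · have hsq : (∑ i ∈ I, b i) ^ 2 = ∑ i ∈ I, b i ^ 2 + ∑ i ∈ I, ∑ l ∈ I \ {i}, b i * b l := by
      rw [sq, sum_mul_sum, sum_sum_eq_sum_add_sum_sum_sdiff]
      simp only [sq]
    have hI' : (2 : ℝ) ≤ #I := by exact_mod_cast hI
    nlinarith [sq_nonneg (∑ i ∈ I, b i), sum_nonneg fun i (_ : i ∈ I) => sq_nonneg (b i)]

section SecondMoments

variable {Ω ι : Type*} [MeasurableSpace Ω] {μ : Measure Ω} [DecidableEq ι] {Z : ι → Ω → ℝ}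
  {v c : ℝ}

lemma integral_sq_sum_mul_eq (hZ : ∀ i, MemLp (Z i) 2 μ) (hdiag : ∀ i, ∫ ω, Z i ω ^ 2 ∂μ = v)
    (hoff : ∀ i l, i ≠ l → ∫ ω, Z i ω * Z l ω ∂μ = c) (I : Finset ι) (b : ι → ℝ) :
    ∫ ω, (∑ i ∈ I, Z i ω * b i) ^ 2 ∂μ =
      v * ∑ i ∈ I, b i ^ 2 + c * ∑ i ∈ I, ∑ l ∈ I \ {i}, b i * b l := by
  have hint : ∀ i l, Integrable (fun ω => b i * b l * (Z i ω * Z l ω)) μ := fun i l =>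
    ((hZ i).integrable_mul (hZ l)).const_mul _
  have hexp : ∀ ω, (∑ i ∈ I, Z i ω * b i) ^ 2 = ∑ i ∈ I, ∑ l ∈ I, b i * b l * (Z i ω * Z l ω) :=
    fun ω => by
      rw [sq, sum_mul_sum]
      exact sum_congr rfl fun i _ => sum_congr rfl fun l _ => by ring
  simp_rw [hexp]
  rw [integral_finsetSum _ fun i _ => integrable_finsetSum _ fun l _ => hint i l]
  simp_rw [integral_finsetSum _ fun l _ => hint _ l, integral_const_mul]
  rw [sum_sum_eq_sum_add_sum_sum_sdiff, mul_sum, mul_sum]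
  congr 1
  · exact sum_congr rfl fun i _ => by simp only [← sq, hdiag]; ring
  · refine sum_congr rfl fun i _ => ?_
    rw [mul_sum]
    refine sum_congr rfl fun l hl => ?_
    rw [hoff i l (by aesop)]
    ring

lemma add_card_sub_one_mul_eq_zero [Fintype ι] (hZ : ∀ i, MemLp (Z i) 2 μ)
    (hdiag : ∀ i, ∫ ω, Z i ω ^ 2 ∂μ = v) (hoff : ∀ i l, i ≠ l → ∫ ω, Z i ω * Z l ω ∂μ = c)
    (hsum : ∀ᵐ ω ∂μ, ∑ i, Z i ω = 0) (j : ι) : v + ((Fintype.card ι : ℝ) - 1) * c = 0 := by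
  have hzero : ∫ ω, ∑ i, Z i ω * Z j ω ∂μ = 0 := by
    refine integral_eq_zero_of_ae ?_
    filter_upwards [hsum] with ω hω
    rw [← sum_mul, hω, zero_mul, Pi.zero_apply]
  have hint : ∀ i, Integrable (fun ω => Z i ω * Z j ω) μ := fun i => (hZ i).integrable_mul (hZ j)
  rw [integral_finsetSum _ fun i _ => hint i,
    sum_eq_add_sum_sdiff_singleton_of_mem (mem_univ j)] at hzero
  rw [← hzero, ← hdiag j, sum_congr rfl fun i hi => hoff i j (by aesop), sum_const,
    card_sdiff_of_subset (by simp), card_univ, card_singleton, nsmul_eq_mul,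
    Nat.cast_sub (Fintype.card_pos_iff.2 ⟨j⟩)]
  simp only [sq, Nat.cast_one]

end SecondMoments

/-- If `(W_1, …, W_n)` is an exchangeable vector of square-integrable
random variables with `∑_i W_i = n` almost surely, `I ⊆ {1, …, n}` has cardinality
`m ≥ 1`, and `(b_i)_{i ∈ I}` are reals, then
`E[(∑_{i∈I} (W_i - 1) b_i)²]
  = E[(W_1 - 1)²] (∑_{i∈I} b_i² - (1/(n-1)) ∑_{i≠ℓ∈I} b_i b_ℓ)
  ≤ (1 + (m-1)/(n-1)) E[(W_1 - 1)²] ∑_{i∈I} b_i²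
  ≤ 2 E[(W_1 - 1)²] ∑_{i∈I} b_i²`. -/
theorem stmt_13 {Ω : Type*} [MeasurableSpace Ω] (μ : Measure Ω) [IsProbabilityMeasure μ]
    (n : ℕ) (hn : 2 ≤ n) (W : Fin n → Ω → ℝ)
    (hL2 : ∀ i, MemLp (W i) 2 μ)
    (hexch : ∀ σ : Equiv.Perm (Fin n),
      Measure.map (fun ω => fun i => W (σ i) ω) μ = Measure.map (fun ω => fun i => W i ω) μ)
    (hsum : ∀ᵐ ω ∂μ, ∑ i, W i ω = n)
    (I : Finset (Fin n)) (m : ℕ) (hm : I.card = m) (b : Fin n → ℝ) :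
    (∫ ω, (∑ i ∈ I, (W i ω - 1) * b i) ^ 2 ∂μ =
      (∫ ω, (W (⟨0, by omega⟩ : Fin n) ω - 1) ^ 2 ∂μ) *
        (∑ i ∈ I, b i ^ 2 - (1 / ((n : ℝ) - 1)) * ∑ i ∈ I, ∑ l ∈ I \ {i}, b i * b l)) ∧
    ((∫ ω, (W (⟨0, by omega⟩ : Fin n) ω - 1) ^ 2 ∂μ) *
        (∑ i ∈ I, b i ^ 2 - (1 / ((n : ℝ) - 1)) * ∑ i ∈ I, ∑ l ∈ I \ {i}, b i * b l) ≤
      (1 + ((m : ℝ) - 1) / ((n : ℝ) - 1)) *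
        (∫ ω, (W (⟨0, by omega⟩ : Fin n) ω - 1) ^ 2 ∂μ) * ∑ i ∈ I, b i ^ 2) ∧
    ((1 + ((m : ℝ) - 1) / ((n : ℝ) - 1)) *
        (∫ ω, (W (⟨0, by omega⟩ : Fin n) ω - 1) ^ 2 ∂μ) * ∑ i ∈ I, b i ^ 2 ≤
      2 * (∫ ω, (W (⟨0, by omega⟩ : Fin n) ω - 1) ^ 2 ∂μ) * ∑ i ∈ I, b i ^ 2) := by
  set i₀ : Fin n := ⟨0, by omega⟩
  set i₁ : Fin n := ⟨1, by omega⟩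
  set v := ∫ ω, (W i₀ ω - 1) ^ 2 ∂μ
  set c := ∫ ω, (W i₀ ω - 1) * (W i₁ ω - 1) ∂μ
  have hW : ∀ i, AEMeasurable (W i) μ := fun i => (hL2 i).aestronglyMeasurable.aemeasurable
  have hZ : ∀ i, MemLp (fun ω => W i ω - 1) 2 μ := fun i => (hL2 i).sub (memLp_const 1)
  have hdiag : ∀ i, ∫ ω, (W i ω - 1) ^ 2 ∂μ = v := fun i =>
    ((Exchangeable.identDistrib hexch hW i i₀).comp
      (by fun_prop : Measurable fun x : ℝ => (x - 1) ^ 2)).integral_eq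
  have hoff : ∀ i l, i ≠ l → ∫ ω, (W i ω - 1) * (W l ω - 1) ∂μ = c := fun i l hil =>
    ((Exchangeable.identDistrib_pair hexch hW hil (by simp [i₀, i₁, Fin.ext_iff])).comp
      (by fun_prop : Measurable fun p : ℝ × ℝ => (p.1 - 1) * (p.2 - 1))).integral_eq
  have hsum' : ∀ᵐ ω ∂μ, ∑ i, (W i ω - 1) = 0 := by
    filter_upwards [hsum] with ω hω
    simp [hω]
  have hvc : v + ((n : ℝ) - 1) * c = 0 := by
    simpa using add_card_sub_one_mul_eq_zero hZ hdiag hoff hsum' i₀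
  have hn1 : (0 : ℝ) < n - 1 := by
    have : (2 : ℝ) ≤ n := by exact_mod_cast hn
    linarith
  have hmn : (m : ℝ) ≤ n := by
    rw [← hm]
    exact_mod_cast (card_le_univ I).trans_eq (Fintype.card_fin n)
  have hv : 0 ≤ v := integral_nonneg fun ω => sq_nonneg _
  have hT := hm ▸ neg_card_sub_one_mul_sum_sq_le I b
  refine ⟨?_, ?_, ?_⟩
  · have hc : c = -v / (n - 1) := eq_div_of_mul_eq hn1.ne' (by linarith)
    rw [integral_sq_sum_mul_eq hZ hdiag hoff, hc]
    ring
  · have := mul_le_mul_of_nonneg_left hT (div_nonneg hv hn1.le)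
    linear_combination this
  · have : ((m : ℝ) - 1) / (n - 1) ≤ 1 := div_le_one_of_le₀ (by linarith) hn1.le
    gcongr
    linarith
end

section
/- Let (Ω_X, 𝒜_X, μ) and (Ω_W, 𝒜_W, ν) be probability spaces and, for each n ≥ 1, let Q_n, V_n : Ω_X × Ω_W → ℝ be measurable with respect to the product σ-algebra. Let F : ℝ → [0,1] be a continuous cumulative distribution function. Suppose that (i) the random variables x ↦ sup_{t∈ℝ} |ν({w : Q_n(x,w) ≤ t}) − F(t)| converge to 0 in μ-probability, and (ii) for every ε > 0 and δ > 0, μ({x : ν({w : |V_n(x,w)| > ε}) > δ}) → 0 as n → ∞. Then the random variables x ↦ sup_{t∈ℝ} |ν({w : Q_n(x,w) + V_n(x,w) ≤ t}) − F(t)| also converge to 0 in μ-probability. -/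
/-!
Perturbing `Q` by `V` moves the conditional cdf at `t` by at most the conditional probability
that `|V| > η`, up to replacing `t` by `t ± η`. Since `F` is uniformly continuous, the latter
costs at most `ε / 3` for a suitable `η`, so outside the two `μ`-small events of the hypotheses
the Kolmogorov distance of `Q + V` to `F` is at most `ε`.
-/

open MeasureTheory ENNReal Filter Set

theorem Real.uniformContinuous_of_tendsto_atBot_atTop {F : ℝ → ℝ} {a b : ℝ} (hF : Continuous F)
    (hF_bot : Tendsto F atBot (nhds a)) (hF_top : Tendsto F atTop (nhds b)) :
    UniformContinuous F := by
  -- `F` minus the ramp from `a` to `b` on `[0, 1]` vanishes at infinity, hence is uniformly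
  -- continuous by Heine–Cantor.
  set ramp : ℝ → ℝ := fun t => a + (b - a) * (projIcc (0 : ℝ) 1 zero_le_one t : ℝ)
  have ramp_uc : UniformContinuous ramp := uniformContinuous_const.add
    ((uniformContinuous_subtype_val.comp (LipschitzWith.projIcc zero_le_one).uniformContinuous)
      |>.const_mul' _)
  have ramp_bot : Tendsto ramp atBot (nhds a) := by
    refine tendsto_const_nhds.congr' ?_
    filter_upwards [eventually_le_atBot 0] with t ht
    simp [ramp, projIcc_of_le_left _ ht]
  have ramp_top : Tendsto ramp atTop (nhds b) := by
    refine tendsto_const_nhds.congr' ?_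
    filter_upwards [eventually_ge_atTop 1] with t ht
    simp [ramp, projIcc_of_right_le _ ht]
  have diff_uc : UniformContinuous fun t => F t - ramp t := by
    refine (hF.sub ramp_uc.continuous).uniformContinuous_of_tendsto_cocompact (x := 0) ?_
    rw [cocompact_eq_atBot_atTop, tendsto_sup]
    exact ⟨by simpa using hF_bot.sub ramp_bot, by simpa using hF_top.sub ramp_top⟩
  simpa using diff_uc.add ramp_uc

theorem MeasureTheory.tendsto_measure_zero_of_subset_union {α ι : Type*} [MeasurableSpace α]
    {μ : Measure α} {l : Filter ι} {s a b : ι → Set α} (hs : ∀ i, s i ⊆ a i ∪ b i)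
    (ha : Tendsto (fun i => μ (a i)) l (nhds 0)) (hb : Tendsto (fun i => μ (b i)) l (nhds 0)) :
    Tendsto (fun i => μ (s i)) l (nhds 0) :=
  tendsto_of_tendsto_of_tendsto_of_le_of_le tendsto_const_nhds (by simpa using ha.add hb)
    (fun _ => zero_le) (fun i => (measure_mono (hs i)).trans (measure_union_le _ _))

section KolmogorovDist

variable {Ω : Type*} [MeasurableSpace Ω] {ν : Measure Ω}

noncomputable def kolmogorovDist (ν : Measure Ω) (q : Ω → ℝ) (F : ℝ → ℝ) : ℝ :=
  ⨆ t : ℝ, |ν.real {w | q w ≤ t} - F t|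

theorem abs_cdf_sub_le_kolmogorovDist [IsProbabilityMeasure ν] {F : ℝ → ℝ}
    (hF : ∀ t, F t ∈ Icc 0 1) (q : Ω → ℝ) (t : ℝ) :
    |ν.real {w | q w ≤ t} - F t| ≤ kolmogorovDist ν q F := by
  refine le_ciSup (f := fun s => |ν.real {w | q w ≤ s} - F s|) ⟨1, ?_⟩ t
  rintro _ ⟨s, rfl⟩
  exact Real.dist_le_of_mem_Icc_01 ⟨measureReal_nonneg, measureReal_le_one⟩ (hF s)

variable [IsFiniteMeasure ν] (q v : Ω → ℝ) (t η : ℝ)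

theorem measureReal_add_le_le :
    ν.real {w | q w + v w ≤ t} ≤ ν.real {w | q w ≤ t + η} + ν.real {w | η < |v w|} := by
  refine (measureReal_mono fun w hw => ?_).trans (measureReal_union_le _ _)
  by_cases hv : η < |v w|
  · exact Or.inr hv
  · exact Or.inl (show q w ≤ t + η by
      linarith [(abs_le.1 (not_lt.1 hv)).1, show q w + v w ≤ t from hw])

theorem measureReal_le_sub_le :
    ν.real {w | q w ≤ t - η} ≤ ν.real {w | q w + v w ≤ t} + ν.real {w | η < |v w|} := by
  refine (measureReal_mono fun w hw => ?_).trans (measureReal_union_le _ _)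
  by_cases hv : η < |v w|
  · exact Or.inr hv
  · exact Or.inl (show q w + v w ≤ t by
      linarith [(abs_le.1 (not_lt.1 hv)).2, show q w ≤ t - η from hw])

theorem kolmogorovDist_add_le [IsProbabilityMeasure ν] {F : ℝ → ℝ} (hF : ∀ t, F t ∈ Icc 0 1)
    {c : ℝ} (hF_mod : ∀ t, |F (t + η) - F t| ≤ c) :
    kolmogorovDist ν (fun w => q w + v w) F ≤
      kolmogorovDist ν q F + ν.real {w | η < |v w|} + c := by
  refine ciSup_le fun t => abs_sub_le_iff.2 ⟨?_, ?_⟩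
  · have hcdf := abs_le.1 (abs_cdf_sub_le_kolmogorovDist (ν := ν) hF q (t + η))
    have hmod := abs_le.1 (hF_mod t)
    linarith [measureReal_add_le_le (ν := ν) q v t η]
  · have hcdf := abs_le.1 (abs_cdf_sub_le_kolmogorovDist (ν := ν) hF q (t - η))
    have hmod := abs_le.1 (hF_mod (t - η))
    rw [sub_add_cancel] at hmod
    linarith [measureReal_le_sub_le (ν := ν) q v t η]

end KolmogorovDist

theorem exists_pos_forall_abs_add_sub_le {F : ℝ → ℝ} (hF : UniformContinuous F) {c : ℝ}
    (hc : 0 < c) : ∃ η > 0, ∀ t, |F (t + η) - F t| ≤ c := by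
  obtain ⟨δ, hδ, hFδ⟩ := Metric.uniformContinuous_iff.1 hF c hc
  refine ⟨δ / 2, half_pos hδ, fun t => (hFδ ?_).le⟩
  rw [Real.dist_eq, add_sub_cancel_left, abs_of_pos (half_pos hδ)]
  exact half_lt_self hδ

theorem stmt_19_general {ΩX ΩW : Type*} [MeasurableSpace ΩX] [MeasurableSpace ΩW]
    (μ : Measure ΩX) (ν : Measure ΩW) [IsProbabilityMeasure μ] [IsProbabilityMeasure ν]
    (Q V : ℕ → ΩX × ΩW → ℝ)
    (F : ℝ → ℝ) (hF_cont : Continuous F) (hF_mono : Monotone F)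
    (hF_bot : Tendsto F atBot (nhds 0)) (hF_top : Tendsto F atTop (nhds 1))
    (hQF : ∀ ε : ℝ, 0 < ε →
      Tendsto (fun n : ℕ =>
          μ {x | ε < ⨆ t : ℝ, |(ν {w | Q n (x, w) ≤ t}).toReal - F t|})
        atTop (nhds 0))
    (hVsmall : ∀ ε : ℝ, 0 < ε → ∀ δ : ℝ, 0 < δ →
      Tendsto (fun n : ℕ =>
          μ {x | ENNReal.ofReal δ < ν {w | ε < |V n (x, w)|}}) atTop (nhds 0)) :
    ∀ ε : ℝ, 0 < ε →
      Tendsto (fun n : ℕ =>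
          μ {x | ε < ⨆ t : ℝ, |(ν {w | Q n (x, w) + V n (x, w) ≤ t}).toReal - F t|})
        atTop (nhds 0) := by
  intro ε hε
  have hF01 : ∀ t, F t ∈ Icc 0 1 := fun t =>
    ⟨hF_mono.le_of_tendsto hF_bot t, hF_mono.ge_of_tendsto hF_top t⟩
  obtain ⟨η, hη, hF_mod⟩ := exists_pos_forall_abs_add_sub_le
    (Real.uniformContinuous_of_tendsto_atBot_atTop hF_cont hF_bot hF_top)
    (by positivity : 0 < ε / 3)
  refine tendsto_measure_zero_of_subset_union (fun n x hx => ?_)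
    (hQF (ε / 3) (by positivity)) (hVsmall η hη (ε / 3) (by positivity))
  by_contra hsmall
  simp only [mem_union, mem_ofPred_eq, not_or, not_lt] at hx hsmall
  have hV := ENNReal.toReal_le_of_le_ofReal (by positivity) hsmall.2
  have hdist := kolmogorovDist_add_le (ν := ν) (fun w => Q n (x, w)) (fun w => V n (x, w)) η
    hF01 hF_mod
  unfold kolmogorovDist Measure.real at hdist
  linarith [hsmall.1]

/-- Transition of stochastic orders for bootstrap distributions:
if the conditional (bootstrap) distribution functions of `Q_n` converge uniformly to a
continuous cdf `F` in `μ`-probability, and `V_n → 0` conditionally in `ν`-probability,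
in `μ`-probability, then the conditional distribution functions of `Q_n + V_n` also
converge uniformly to `F` in `μ`-probability. -/
theorem stmt_19 {ΩX ΩW : Type*} [MeasurableSpace ΩX] [MeasurableSpace ΩW]
    (μ : Measure ΩX) (ν : Measure ΩW) [IsProbabilityMeasure μ] [IsProbabilityMeasure ν]
    (Q V : ℕ → ΩX × ΩW → ℝ) (hQ : ∀ n, Measurable (Q n)) (hV : ∀ n, Measurable (V n))
    (F : ℝ → ℝ) (hF_cont : Continuous F) (hF_mono : Monotone F)
    (hF_bot : Tendsto F atBot (nhds 0)) (hF_top : Tendsto F atTop (nhds 1))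
    (hQF : ∀ ε : ℝ, 0 < ε →
      Tendsto (fun n : ℕ =>
          μ {x | ε < ⨆ t : ℝ, |(ν {w | Q n (x, w) ≤ t}).toReal - F t|})
        atTop (nhds 0))
    (hVsmall : ∀ ε : ℝ, 0 < ε → ∀ δ : ℝ, 0 < δ →
      Tendsto (fun n : ℕ =>
          μ {x | ENNReal.ofReal δ < ν {w | ε < |V n (x, w)|}}) atTop (nhds 0)) :
    ∀ ε : ℝ, 0 < ε →
      Tendsto (fun n : ℕ =>
          μ {x | ε < ⨆ t : ℝ, |(ν {w | Q n (x, w) + V n (x, w) ≤ t}).toReal - F t|})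
        atTop (nhds 0) :=
  stmt_19_general μ ν Q V F hF_cont hF_mono hF_bot hF_top hQF hVsmall
end
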